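/- Let U ⊆ ℝⁿ be open, ψ: U → (0, ∞) a C^∞ function such that ψ and 1/ψ are tempered along ∂U, and h: ℝ → ℝ a C^∞ function with 0 ≤ h ≤ 1, h(t) = 1 for t ≤ 1/2 and h(t) = 0 for t ≥ 1. Define α on ℝⁿ × (0, ∞) by α(x, t) = h(t/ψ(x)) for x ∈ U and α(x, t) = 0 for x ∉ U. Then α is C^∞ on ℝⁿ × (0, ∞), 0 ≤ α ≤ 1, α(x,t) = 1 whenever x ∈ U and t ≤ ψ(x)/2, and α(x,t) = 0 whenever x ∉ U or t ≥ ψ(x). -/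
import Mathlib


open scoped Classical

/-- `g` has polynomial growth at `p` relative to the open set `U`. -/
def HasPolyGrowthAt {F : Type*} [NormedAddCommGroup F] (U : Set F)
    (g : F → ℝ) (p : F) : Prop :=
  ∃ K : Set F, IsCompact K ∧ K ∈ nhds p ∧
    ∃ C N : ℝ, 0 < C ∧ 0 < N ∧
      ∀ x ∈ K ∩ U, |g x| ≤ C * Metric.infDist x (K \ U) ^ (-N)

/-- Let `U ⊆ ℝⁿ` be open and `ψ : U → (0,∞)` a `C^∞` function such that `ψ` and `1/ψ` are
tempered along `∂U` (all derivatives of `ψ`, and `1/ψ`, have polynomial growth), with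
`ψ ≤ φ` for some continuous `φ` on `closure U` vanishing on `∂U`.  Let `h : ℝ → ℝ` be
`C^∞` with `0 ≤ h ≤ 1`, `h = 1` on `(-∞, 1/2]` and `h = 0` on `[1, ∞)`.  Then the cutoff
`α(x,t) = h(t/ψ(x))` for `x ∈ U`, `α(x,t) = 0` for `x ∉ U`, is `C^∞` on `ℝⁿ × (0,∞)`,
satisfies `0 ≤ α ≤ 1`, equals `1` where `x ∈ U` and `t ≤ ψ(x)/2`, and equals `0` where
`x ∉ U` or `t ≥ ψ(x)`. -/
theorem stmt8 (n : ℕ) (U : Set (EuclideanSpace ℝ (Fin n))) (hU : IsOpen U)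
    (ψ : EuclideanSpace ℝ (Fin n) → ℝ)
    (hψpos : ∀ x ∈ U, 0 < ψ x)
    (hψsmooth : ContDiffOn ℝ (⊤ : ℕ∞) ψ U)
    (hψtemp : ∀ (k : ℕ) (p : EuclideanSpace ℝ (Fin n)),
      HasPolyGrowthAt U (fun x => ‖iteratedFDerivWithin ℝ k ψ U x‖) p)
    (hψinvtemp : ∀ p : EuclideanSpace ℝ (Fin n),
      HasPolyGrowthAt U (fun x => 1 / ψ x) p)
    (φ : EuclideanSpace ℝ (Fin n) → ℝ)
    (hφc : ContinuousOn φ (closure U)) (hφ0 : ∀ x ∈ frontier U, φ x = 0)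
    (hψφ : ∀ x ∈ U, ψ x ≤ φ x)
    (h : ℝ → ℝ) (hh : ContDiff ℝ (⊤ : ℕ∞) h)
    (hh01 : ∀ t, 0 ≤ h t ∧ h t ≤ 1)
    (hh1 : ∀ t ≤ (1 : ℝ) / 2, h t = 1) (hh0 : ∀ t, 1 ≤ t → h t = 0)
    (α : EuclideanSpace ℝ (Fin n) × ℝ → ℝ)
    (hα : ∀ x t, α (x, t) = if x ∈ U then h (t / ψ x) else 0) :
    ContDiffOn ℝ (⊤ : ℕ∞) α {p : EuclideanSpace ℝ (Fin n) × ℝ | 0 < p.2} ∧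
    (∀ p : EuclideanSpace ℝ (Fin n) × ℝ, 0 < p.2 → 0 ≤ α p ∧ α p ≤ 1) ∧
    (∀ x ∈ U, ∀ t : ℝ, 0 < t → t ≤ ψ x / 2 → α (x, t) = 1) ∧
    (∀ (x : EuclideanSpace ℝ (Fin n)) (t : ℝ), 0 < t →
      (x ∉ U ∨ ψ x ≤ t) → α (x, t) = 0) := by
  refine ⟨?_, ?_, ?_, ?_⟩
  · rintro ⟨x, t⟩ hp
    simp only [Set.mem_setOf_eq] at hp
    by_cases hx : x ∈ U
    · have hψat : ContDiffAt ℝ (⊤ : ℕ∞) ψ x := hψsmooth.contDiffAt (hU.mem_nhds hx)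
      have hsm : ContDiffAt ℝ (⊤ : ℕ∞)
          (fun p : EuclideanSpace ℝ (Fin n) × ℝ => h (p.2 / ψ p.1)) (x, t) :=
        hh.contDiffAt.comp _
          (contDiffAt_snd.div (hψat.comp _ contDiffAt_fst) (ne_of_gt (hψpos x hx)))
      refine (hsm.congr_of_eventuallyEq ?_).contDiffWithinAt
      filter_upwards [(hU.prod isOpen_univ).mem_nhds
        (⟨hx, trivial⟩ : (x, t) ∈ U ×ˢ Set.univ)] with q hq
      rw [show α q = α (q.1, q.2) from rfl, hα, if_pos hq.1]
    · have hzero : ∀ᶠ q in nhds (x, t), α q = 0 := by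
        by_cases hxc : x ∈ closure U
        · have hfr : x ∈ frontier U := by
            rw [hU.frontier_eq]; exact ⟨hxc, hx⟩
          have h0 : φ x = 0 := hφ0 x hfr
          have hmem : φ ⁻¹' Set.Iio (t / 2) ∈ nhdsWithin x (closure U) := by
            apply hφc x hxc
            rw [h0]; exact Iio_mem_nhds (by linarith)
          obtain ⟨u, huo, hxu, hu⟩ := mem_nhdsWithin.1 hmem
          have hmem2 : u ×ˢ Set.Ioi (t / 2) ∈ nhds (x, t) :=
            (huo.prod isOpen_Ioi).mem_nhds ⟨hxu, by simp; linarith⟩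
          filter_upwards [hmem2] with q hq
          rw [show α q = α (q.1, q.2) from rfl, hα]
          split_ifs with hqU
          · apply hh0
            have hφq : φ q.1 < t / 2 := hu ⟨hq.1, subset_closure hqU⟩
            have hψq : ψ q.1 < t / 2 := lt_of_le_of_lt (hψφ _ hqU) hφq
            have hpos := hψpos q.1 hqU
            have ht2 : t / 2 < q.2 := hq.2
            rw [le_div_iff₀ hpos]
            nlinarith
          · rfl
        · filter_upwards [(isClosed_closure.isOpen_compl.prod isOpen_univ).mem_nhds
            (⟨hxc, trivial⟩ : (x, t) ∈ (closure U)ᶜ ×ˢ Set.univ)] with q hq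
          rw [show α q = α (q.1, q.2) from rfl, hα,
            if_neg (fun hqU => hq.1 (subset_closure hqU))]
      exact (contDiffAt_const.congr_of_eventuallyEq hzero).contDiffWithinAt
  · rintro ⟨x, t⟩ _
    rw [hα]
    split_ifs
    · exact hh01 _
    · exact ⟨le_refl 0, zero_le_one⟩
  · intro x hx t _ hle
    rw [hα, if_pos hx]
    apply hh1
    rw [div_le_div_iff₀ (hψpos x hx) (by norm_num : (0:ℝ) < 2)]
    linarith
  · intro x t _ hcase
    rw [hα]
    rcases hcase with h1 | h2
    · rw [if_neg h1]
    · split_ifs with hx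
      · exact hh0 _ ((one_le_div (hψpos x hx)).2 h2)
      · rfl
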